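/- arXiv:2201.02763 — 5 statements merged into one kernel-verified Lean document; each statement's English description precedes it below -/
import Mathlib

section
/- Let R be a commutative ring, A a commutative group, and S ⊂ A a generating set of A. Then for each n ∈ ℤ⁺, the n-th power Iⁿ of the augmentation ideal I of R[A] is generated as an ideal by the products Δ_{s₁}⋯Δ_{s_n} with s₁,…,s_n ∈ S, where Δ_s = [s] − [0]. -/
/-!
Writing `Δ_a = [a] - [0]`, every `x ∈ R[A]` satisfies `x - aug(x)·[0] = ∑ x_a Δ_a`, so the
augmentation ideal is spanned by all `Δ_a`. The identity `[a] Δ_b = Δ_{a+b} - Δ_a` shows that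
the ideal spanned by the `Δ_s`, `s ∈ S`, contains `Δ_a` for every `a` in the subgroup generated
by `S`. Hence `I = (Δ_s : s ∈ S)`, and a power of a spanned ideal is spanned by the products
of the generators.
-/

/-- The augmentation map of the group ring `R[A]`, sending `∑ r_a [a]` to `∑ r_a`. -/
noncomputable def aug (R : Type*) [CommRing R] (A : Type*) [AddCommGroup A] :
    AddMonoidAlgebra R A →ₐ[R] R :=
  (AddMonoidAlgebra.lift R R A) 1

/-- The augmentation ideal of `R[A]`, i.e. the kernel of the augmentation map. -/
noncomputable def augIdeal (R : Type*) [CommRing R] (A : Type*) [AddCommGroup A] :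
    Ideal (AddMonoidAlgebra R A) :=
  RingHom.ker (aug R A).toRingHom

open AddMonoidAlgebra Pointwise

noncomputable def delta (R : Type*) [CommRing R] {A : Type*} [AddCommGroup A] (a : A) :
    AddMonoidAlgebra R A :=
  single a 1 - single 0 1

theorem Set.image_pow_eq_setOf_list_prod {M ι : Type*} [Monoid M] (f : ι → M) (S : Set ι)
    (n : ℕ) :
    (f '' S) ^ n = {x | ∃ l : List ι, l.length = n ∧ (∀ s ∈ l, s ∈ S) ∧ x = (l.map f).prod} := by
  induction n with
  | zero =>
    ext x
    simp [List.length_eq_zero_iff]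
  | succ n ih =>
    ext x
    rw [pow_succ', ih, Set.mem_mul]
    constructor
    · rintro ⟨_, ⟨s, hs, rfl⟩, _, ⟨l, rfl, hl, rfl⟩, rfl⟩
      exact ⟨s :: l, rfl, by simpa [hs] using hl, rfl⟩
    · rintro ⟨_ | ⟨s, l⟩, hlen, hl, rfl⟩
      · simp at hlen
      · simp only [List.mem_cons, forall_eq_or_imp] at hl
        exact ⟨f s, ⟨s, hl.1, rfl⟩, _, ⟨l, by simpa using hlen, hl.2, rfl⟩, rfl⟩

section Augmentation

variable (R : Type*) [CommRing R] {A : Type*} [AddCommGroup A]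

theorem aug_single (a : A) (r : R) : aug R A (single a r) = r := by
  simp [aug]

@[simp]
theorem delta_zero : delta R (0 : A) = 0 :=
  sub_self _

theorem single_mul_delta (a b : A) :
    single a (1 : R) * delta R b = delta R (a + b) - delta R a := by
  simp only [delta, mul_sub, single_mul_single, mul_one, add_zero]
  abel

theorem delta_mem_span_image {S : Set A} {a : A} (ha : a ∈ AddSubgroup.closure S) :
    delta R a ∈ Ideal.span (delta R '' S) := by
  induction ha using AddSubgroup.closure_induction with
  | mem s hs => exact Ideal.subset_span ⟨s, hs, rfl⟩
  | zero => simp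
  | add x y _ _ hx hy =>
    have h := single_mul_delta R x y
    rw [eq_sub_iff_add_eq] at h
    rw [← h]
    exact add_mem (Ideal.mul_mem_left _ _ hy) hx
  | neg x _ hx =>
    have h := single_mul_delta R (-x) x
    rw [neg_add_cancel, delta_zero, zero_sub] at h
    rw [← neg_neg (delta R (-x)), ← h]
    exact neg_mem (Ideal.mul_mem_left _ _ hx)

theorem sub_single_aug_mem_span_delta (x : AddMonoidAlgebra R A) :
    x - single 0 (aug R A x) ∈ Ideal.span (Set.range (delta R)) := by
  induction x using induction_linear with
  | zero => simp
  | add x y hx hy =>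
    rw [map_add, single_add, add_sub_add_comm]
    exact add_mem hx hy
  | single a r =>
    have h : single a r - single 0 r = r • delta R a := by
      simp [delta, smul_sub]
    rw [aug_single, h]
    exact Submodule.smul_of_tower_mem _ r (Ideal.subset_span ⟨a, rfl⟩)

theorem augIdeal_eq_span_range_delta :
    augIdeal R A = Ideal.span (Set.range (delta R)) := by
  apply le_antisymm
  · intro x (hx : aug R A x = 0)
    simpa [hx] using sub_single_aug_mem_span_delta R x
  · rw [Ideal.span_le]
    rintro _ ⟨a, rfl⟩
    show aug R A (delta R a) = 0
    simp [delta, aug_single]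

theorem augIdeal_eq_span_delta_image {S : Set A} (hS : AddSubgroup.closure S = ⊤) :
    augIdeal R A = Ideal.span (delta R '' S) := by
  rw [augIdeal_eq_span_range_delta]
  refine le_antisymm ?_ (Ideal.span_mono (Set.image_subset_range _ _))
  rw [Ideal.span_le]
  rintro _ ⟨a, rfl⟩
  exact delta_mem_span_image R (hS ▸ AddSubgroup.mem_top a)

end Augmentation

theorem augIdeal_pow_span_general (R : Type*) [CommRing R] (A : Type*) [AddCommGroup A]
    (S : Set A) (hS : AddSubgroup.closure S = ⊤) (n : ℕ) :
    augIdeal R A ^ n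
      = Ideal.span {x : AddMonoidAlgebra R A |
          ∃ l : List A, l.length = n ∧ (∀ s ∈ l, s ∈ S) ∧
            x = (l.map fun s => AddMonoidAlgebra.single s (1 : R)
                  - AddMonoidAlgebra.single (0 : A) (1 : R)).prod} := by
  rw [augIdeal_eq_span_delta_image R hS, Submodule.span_pow, Set.image_pow_eq_setOf_list_prod]
  rfl

/-- If `S` generates `A` as a group, then for `n ≥ 1` the `n`-th power of the augmentation
ideal of `R[A]` is generated as an ideal by the `n`-fold products `Δ_{s₁} ⋯ Δ_{s_n}`
with `s₁, …, s_n ∈ S`, where `Δ_s = [s] - [0]`. -/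
theorem augIdeal_pow_span (R : Type*) [CommRing R] (A : Type*) [AddCommGroup A]
    (S : Set A) (hS : AddSubgroup.closure S = ⊤) (n : ℕ) (hn : 1 ≤ n) :
    augIdeal R A ^ n
      = Ideal.span {x : AddMonoidAlgebra R A |
          ∃ l : List A, l.length = n ∧ (∀ s ∈ l, s ∈ S) ∧
            x = (l.map fun s => AddMonoidAlgebra.single s (1 : R)
                  - AddMonoidAlgebra.single (0 : A) (1 : R)).prod} :=
  augIdeal_pow_span_general R A S hS n
end

section
/- Let f: A → B be a map between commutative groups, and let ε: A' → A be a surjective group homomorphism. Then fdeg(f ∘ ε) = fdeg(f). Moreover, for arbitrary (not necessarily surjective) ε, fdeg(f ∘ ε) ≤ fdeg(f). -/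
open Classical in
/-- Difference operator: `(Δ_a f)(x) = f (x + a) - f x`. -/
def fdiff {A B : Type*} [AddCommGroup A] [AddCommGroup B] (a : A) (f : A → B) : A → B :=
  fun x => f (x + a) - f x

/-- `DegLE f n` means every `(n+1)`-fold difference of `f` vanishes, i.e. `fdeg f ≤ n`. -/
def DegLE {A B : Type*} [AddCommGroup A] [AddCommGroup B] (f : A → B) (n : ℕ) : Prop :=
  ∀ l : List A, l.length = n + 1 → l.foldr fdiff f = 0

open Classical in
/-- The functional degree of `f : A → B`, valued in `ℕ ∪ {-∞, ∞}`:
`fdeg 0 = ⊥ (= -∞)`; for nonzero `f`, it is the least `n` with all `(n+1)`-fold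
differences of `f` vanishing, or `⊤ (= ∞)` if there is no such `n`. -/
noncomputable def fdeg {A B : Type*} [AddCommGroup A] [AddCommGroup B] (f : A → B) :
    WithBot ℕ∞ :=
  if f = 0 then ⊥
  else if ∃ n : ℕ, DegLE f n then (((sInf {n : ℕ | DegLE f n} : ℕ) : ℕ∞) : WithBot ℕ∞)
  else ((⊤ : ℕ∞) : WithBot ℕ∞)

section Aux

variable {A A' B : Type*} [AddCommGroup A] [AddCommGroup A'] [AddCommGroup B]

lemma fdiff_comp (ε : A' →+ A) (g : A → B) (a : A') :
    fdiff a (g ∘ ε) = (fdiff (ε a) g) ∘ ε := by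
  funext x; simp [fdiff, map_add]

lemma foldr_fdiff_comp (ε : A' →+ A) (f : A → B) (l : List A') :
    l.foldr fdiff (f ∘ ε) = ((l.map ε).foldr fdiff f) ∘ ε := by
  induction l with
  | nil => rfl
  | cons a l ih =>
      simp only [List.foldr_cons, List.map_cons, ih, fdiff_comp]

lemma degle_comp (ε : A' →+ A) (f : A → B) {n : ℕ} (h : DegLE f n) : DegLE (f ∘ ε) n := by
  intro l hl
  rw [foldr_fdiff_comp, h (l.map ε) (by simp [hl])]
  rfl

lemma degle_comp_surj (ε : A' →+ A) (hs : Function.Surjective ε) (f : A → B) {n : ℕ}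
    (h : DegLE (f ∘ ε) n) : DegLE f n := by
  intro l hl
  set l' := l.map (Function.surjInv hs)
  have hmap : l'.map ε = l := by
    have hid : ⇑ε ∘ Function.surjInv hs = id := funext (Function.surjInv_eq hs)
    simp [l', List.map_map, hid]
  have := h l' (by simp [l', hl])
  rw [foldr_fdiff_comp, hmap] at this
  funext x
  obtain ⟨y, rfl⟩ := hs x
  exact congrFun this y

lemma comp_eq_zero_iff (ε : A' →+ A) (hs : Function.Surjective ε) (f : A → B) :
    f ∘ ε = 0 ↔ f = 0 := by
  constructor
  · intro h; funext x; obtain ⟨y, rfl⟩ := hs x; exact congrFun h y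
  · rintro rfl; rfl

lemma fdeg_zero : fdeg (0 : A → B) = ⊥ := if_pos rfl

lemma fdeg_le_top (g : A → B) : fdeg g ≤ ((⊤ : ℕ∞) : WithBot ℕ∞) := by
  unfold fdeg
  split
  · exact bot_le
  · split
    · exact WithBot.coe_le_coe.mpr le_top
    · exact le_rfl

end Aux

/-- Precomposition with a group homomorphism does not increase the functional degree,
and preserves it when the homomorphism is surjective. -/
theorem fdeg_comp_hom {A A' B : Type*} [AddCommGroup A] [AddCommGroup A'] [AddCommGroup B]
    (f : A → B) :
    (∀ ε : A' →+ A, fdeg (f ∘ ε) ≤ fdeg f) ∧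
      ∀ ε : A' →+ A, Function.Surjective ε → fdeg (f ∘ ε) = fdeg f := by
  constructor
  · intro ε
    by_cases hf : f = 0
    · subst hf
      have h0 : (0 : A → B) ∘ ε = 0 := rfl
      rw [h0, fdeg_zero]
      exact bot_le

    · by_cases hfe : f ∘ ε = 0
      · simp [fdeg, hfe]
      · by_cases hex : ∃ n : ℕ, DegLE f n
        · have hex' : ∃ n : ℕ, DegLE (f ∘ ε) n := hex.imp fun n hn => degle_comp ε f hn
          rw [fdeg, fdeg, if_neg hf, if_neg hfe, if_pos hex, if_pos hex']
          have hmem : DegLE f (sInf {n : ℕ | DegLE f n}) := Nat.sInf_mem hex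
          have hle : sInf {n : ℕ | DegLE (f ∘ ε) n} ≤ sInf {n : ℕ | DegLE f n} :=
            Nat.sInf_le (degle_comp ε f hmem)
          exact_mod_cast hle
        · have htop : fdeg f = ((⊤ : ℕ∞) : WithBot ℕ∞) := by
            rw [fdeg, if_neg hf, if_neg hex]
          rw [htop]
          exact fdeg_le_top _
  · intro ε hs
    have hiff := comp_eq_zero_iff ε hs f
    have hset : {n : ℕ | DegLE (f ∘ ε) n} = {n : ℕ | DegLE f n} := by
      ext n
      exact ⟨fun h => degle_comp_surj ε hs f h, fun h => degle_comp ε f h⟩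
    by_cases hf : f = 0
    · rw [fdeg, fdeg, if_pos hf, if_pos (hiff.mpr hf)]
    · rw [fdeg, fdeg, if_neg hf, if_neg (fun h => hf (hiff.mp h)), hset]
      have hiff2 : (∃ n : ℕ, DegLE (f ∘ ε) n) ↔ ∃ n : ℕ, DegLE f n := by
        constructor
        · rintro ⟨n, hn⟩; exact ⟨n, degle_comp_surj ε hs f hn⟩
        · rintro ⟨n, hn⟩; exact ⟨n, degle_comp ε f hn⟩
      by_cases hex : ∃ n : ℕ, DegLE f n
      · rw [if_pos (hiff2.mpr hex), if_pos hex]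
      · rw [if_neg (fun h => hex (hiff2.mp h)), if_neg hex]
end

section
/- Let R be a nonzero commutative ring and A a nontrivial commutative group containing an element of infinite order. Then the augmentation ideal of the group ring R[A] is not nilpotent. -/
/-!
For `a` of infinite order, `n ↦ n • a` is injective, so `X ↦ [a]` embeds `R[X]` into `R[A]`;
hence `[a] - 1` is not nilpotent, as `X - 1` is not. Since `[a] - 1` lies in the augmentation
ideal `I`, `([a] - 1)ⁿ` is a nonzero element of `Iⁿ`.
-/

open AddMonoidAlgebra Polynomial

section

variable {R : Type*} [CommRing R]

theorem single_sub_one_mem_augIdeal {A : Type*} [AddCommGroup A] (a : A) :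
    single a (1 : R) - 1 ∈ augIdeal R A := by
  simp [augIdeal, RingHom.mem_ker, aug]

noncomputable def polynomialToMultiples (R : Type*) [CommRing R] {A : Type*} [AddMonoid A]
    (a : A) : R[X] →+* R[A] :=
  (mapDomainRingHom R (multiplesHom A a)).comp (toFinsuppIso R).toRingHom

theorem polynomialToMultiples_X_sub_one {A : Type*} [AddMonoid A] (a : A) :
    polynomialToMultiples R a (X - 1) = single a 1 - 1 := by
  rw [map_sub, map_one]
  simp [polynomialToMultiples]

theorem polynomialToMultiples_injective {A : Type*} [AddLeftCancelMonoid A] {a : A}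
    (ha : addOrderOf a = 0) : Function.Injective (polynomialToMultiples R a) := by
  show Function.Injective (mapDomainRingHom R (multiplesHom A a) ∘ toFinsuppIso R)
  refine (AddMonoidAlgebra.mapDomain_injective ?_).comp (toFinsuppIso R).injective
  exact injective_nsmul_iff_not_isOfFinAddOrder.mpr (addOrderOf_eq_zero_iff.mp ha)

theorem not_isNilpotent_single_sub_one [Nontrivial R] {A : Type*} [AddLeftCancelMonoid A]
    {a : A} (ha : addOrderOf a = 0) : ¬IsNilpotent (single a (1 : R) - 1) := by
  rw [← polynomialToMultiples_X_sub_one, IsNilpotent.map_iff (polynomialToMultiples_injective ha),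
    Polynomial.isNilpotent_iff]
  exact fun h ↦ not_isNilpotent_one (by simpa [Polynomial.coeff_one] using h 1)

end

theorem augIdeal_not_nilpotent_of_infinite_order_general (R : Type*) [CommRing R] [Nontrivial R]
    (A : Type*) [AddCommGroup A] (a : A) (ha : addOrderOf a = 0) :
    ∀ n : ℕ, 0 < n → augIdeal R A ^ n ≠ ⊥ := by
  intro n _ h
  have hmem := Ideal.pow_mem_pow (single_sub_one_mem_augIdeal (R := R) a) n
  rw [h, Ideal.mem_bot] at hmem
  exact not_isNilpotent_single_sub_one ha ⟨n, hmem⟩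

/-- If `R` is a nonzero commutative ring and the commutative group `A` has an element of
infinite order, then the augmentation ideal of `R[A]` is not nilpotent. -/
theorem augIdeal_not_nilpotent_of_infinite_order (R : Type*) [CommRing R] [Nontrivial R]
    (A : Type*) [AddCommGroup A] [Nontrivial A] (a : A) (ha : addOrderOf a = 0) :
    ∀ n : ℕ, 0 < n → augIdeal R A ^ n ≠ ⊥ :=
  augIdeal_not_nilpotent_of_infinite_order_general R A a ha
end

section
/- Let p be a prime and α, β ∈ ℤ⁺. In ℤ[t], the congruence (t−1)^{(β(p−1)+1)p^{α−1} − 1} ≡ (−p)^{β−1} · ∑_{i=0}^{p^α−1} t^i holds modulo the ideal generated by t^{p^α} − 1 and p^β. -/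
/-!
Write `y = t - 1`, `q = p^(α-1)`, `N = ∑_{i<pq} t^i` (so `y N = t^{pq} - 1`) and
`z = y^((p-1)q)`.
Induction on `α`, starting from `(1+y)^p ≡ 1 + y^p + p y (mod p y²)`, gives
`(1+y)^{pq} ≡ 1 + y^{pq} + p y^q (mod p y (y^q, p))`; dividing by `y`,
`y^{q-1} z ≡ N - p y^{q-1} (mod p J)` with `J = (y^q, p)`.
Modulo `t^{pq} - 1` we have `z N = 0` and `z J ⊆ p J`, so multiplying by `z` repeatedly yields
`y^{q-1} z^β ≡ (-p)^{β-1} N + (-p)^β y^{q-1} (mod p^β J)`, and the last term lies in `(p^β)`.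
-/

open Polynomial

theorem exists_add_one_pow_prime_eq {R : Type*} [CommRing R] {p : ℕ} (hp : p.Prime) (T : R) :
    ∃ c, (T + 1) ^ p = T ^ p + 1 + p * T + p * T ^ 2 * c := by
  have hsplit : Finset.Ioo 0 p = insert 1 (Finset.Ioo 1 p) := by
    ext k; simp only [Finset.mem_Ioo, Finset.mem_insert]; have := hp.two_le; omega
  have hdvd : T ∣ ∑ k ∈ Finset.Ioo 1 p, T ^ (k - 1) * 1 ^ (p - k - 1) * ↑(p.choose k / p) :=
    Finset.dvd_sum fun k hk => by
      have : k - 1 ≠ 0 := by simp only [Finset.mem_Ioo] at hk; omega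
      exact (dvd_pow_self T this).mul_right _ |>.mul_right _
  obtain ⟨c, hc⟩ := hdvd
  refine ⟨c, ?_⟩
  rw [add_pow_prime_eq hp, hsplit, Finset.sum_insert (by simp), hc]
  simp only [le_refl, tsub_eq_zero_of_le, pow_zero, one_pow, Nat.choose_one_right,
    Nat.div_self hp.pos, Nat.cast_one]
  ring

theorem exists_add_one_pow_prime_pow_eq {R : Type*} [CommRing R] {p : ℕ} (hp : p.Prime) (T : R)
    (k : ℕ) :
    ∃ a b, (T + 1) ^ p ^ (k + 1) =
      T ^ p ^ (k + 1) + 1 + p * T ^ p ^ k + p * T ^ (p ^ k + 1) * a + p ^ 2 * T * b := by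
  induction k with
  | zero =>
    obtain ⟨c, hc⟩ := exists_add_one_pow_prime_eq hp T
    exact ⟨c, 0, by simpa [sq] using hc⟩
  | succ k ih =>
    obtain ⟨a, b, hab⟩ := ih
    set q := p ^ k
    set Q := p ^ (k + 1)
    have hq : T ^ q = T * T ^ (q - 1) := by
      rw [← pow_succ', Nat.sub_add_cancel (Nat.one_le_pow _ _ hp.pos)]
    have hQ : (T ^ Q) ^ 2 = T ^ (Q + 1) * T ^ (Q - 1) := by
      rw [← pow_mul, ← pow_add]; congr 1; have := Nat.one_le_pow (k + 1) p hp.pos; omega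
    set E := T ^ (q - 1) + T ^ q * a + p * b
    have hE : (T + 1) ^ Q = (T ^ Q + 1) + p * T * E := by rw [hab, hq]; ring
    -- Expand `((T^Q + 1) + p T E)^p` to second order in `p T E`, and `(T^Q + 1)^p` by `k = 0`.
    obtain ⟨c, hc⟩ := exists_add_one_pow_prime_eq hp (T ^ Q)
    have hF := (powAddExpansion (T ^ Q + 1) (p * T * E) p).property
    set F := (powAddExpansion (T ^ Q + 1) (p * T * E) p).val
    refine ⟨T ^ (Q - 1) * c, (T ^ Q + 1) ^ (p - 1) * E + T * E ^ 2 * F, ?_⟩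
    rw [pow_succ p (k + 1), pow_mul, pow_mul, hE, hF, hc]
    linear_combination p * c * hQ

theorem exists_X_sub_one_pow_prime_pow_sub_one_eq {p : ℕ} (hp : p.Prime) (k : ℕ) :
    ∃ a b : ℤ[X], (X - 1 : ℤ[X]) ^ (p ^ (k + 1) - 1) =
      ∑ i ∈ Finset.range (p ^ (k + 1)), X ^ i - (p : ℤ[X]) * (X - 1) ^ (p ^ k - 1)
        - (p : ℤ[X]) * ((X - 1) ^ p ^ k * a + (p : ℤ[X]) * b) := by
  obtain ⟨a, b, hab⟩ := exists_add_one_pow_prime_pow_eq hp (X - 1 : ℤ[X]) k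
  rw [sub_add_cancel] at hab
  have hpow (m : ℕ) : (X - 1 : ℤ[X]) * (X - 1) ^ (p ^ m - 1) = (X - 1) ^ p ^ m := by
    rw [← pow_succ', Nat.sub_add_cancel (Nat.one_le_pow _ _ hp.pos)]
  refine ⟨a, b, mul_left_cancel₀ (X_sub_C_ne_zero (1 : ℤ)) ?_⟩
  rw [map_one]
  linear_combination hpow (k + 1) - mul_geom_sum (X : ℤ[X]) (p ^ (k + 1)) + p * hpow k - hab

theorem pow_succ_mul_sub_mem_span_pow_mul {R : Type*} [CommRing R] {J : Ideal R} {p y z N : R}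
    (hzN : z * N = 0) (hzy : z * y - (N - p * y) ∈ Ideal.span {p} * J)
    (hzJ : ∀ j ∈ J, z * j ∈ Ideal.span {p} * J) (n : ℕ) :
    z ^ (n + 1) * y - ((-p) ^ n * N + (-p) ^ (n + 1) * y) ∈ Ideal.span {p ^ (n + 1)} * J := by
  induction n with
  | zero => simpa [sub_eq_add_neg] using hzy
  | succ n ih =>
    obtain ⟨j, hj, hj_eq⟩ := Ideal.mem_span_singleton_mul.mp ih
    obtain ⟨j₁, hj₁, hj₁_eq⟩ := Ideal.mem_span_singleton_mul.mp (hzJ j hj)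
    obtain ⟨j₂, hj₂, hj₂_eq⟩ := Ideal.mem_span_singleton_mul.mp hzy
    refine Ideal.mem_span_singleton_mul.mpr
      ⟨j₁ + (-1) ^ (n + 1) * j₂, J.add_mem hj₁ (J.mul_mem_left _ hj₂), ?_⟩
    linear_combination
      z * hj_eq + p ^ (n + 1) * hj₁_eq + (-p) ^ (n + 1) * hj₂_eq - (-p) ^ n * hzN

theorem pow_sub_neg_pow_mul_mem_span_pow {R : Type*} [CommRing R] {p q : ℕ} (hp : 2 ≤ p)
    (hq : 0 < q) {y N a b : R} (hyN : y * N = 0)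
    (h : y ^ (p * q - 1) = N - p * y ^ (q - 1) - p * (y ^ q * a + p * b)) (n : ℕ) :
    y ^ (((n + 1) * (p - 1) + 1) * q - 1) - (-(p : R)) ^ n * N ∈
      Ideal.span {(p : R) ^ (n + 1)} := by
  have hy : y ^ q = y ^ (q - 1) * y := by rw [← pow_succ, Nat.sub_add_cancel hq]
  have hz_eq : y ^ ((p - 1) * q) = y ^ q * y ^ ((p - 2) * q) := by
    rw [← pow_add, show p - 1 = 1 + (p - 2) by omega, add_mul, one_mul]
  have hzy : y ^ ((p - 1) * q) * y ^ (q - 1) = y ^ (p * q - 1) := by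
    have : p * q = (p - 1) * q + q := by rw [← add_one_mul, Nat.sub_add_cancel (by omega)]
    rw [← pow_add]; congr 1; omega
  have hzN : y ^ ((p - 1) * q) * N = 0 := by
    rw [hz_eq, hy]; linear_combination (y ^ (q - 1) * y ^ ((p - 2) * q)) * hyN
  have hzyq : y ^ ((p - 1) * q) * y ^ q = -p * (y ^ q + y * (y ^ q * a + p * b)) := by
    linear_combination y ^ ((p - 1) * q) * hy + y * hzy + y * h + hyN + p * hy
  have hexp :
      y ^ (((n + 1) * (p - 1) + 1) * q - 1) = (y ^ ((p - 1) * q)) ^ (n + 1) * y ^ (q - 1) := by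
    have : ((n + 1) * (p - 1) + 1) * q = (p - 1) * q * (n + 1) + q := by ring
    rw [← pow_mul, ← pow_add]; congr 1; omega
  set J := Ideal.span {y ^ q, (p : R)}
  set z := y ^ ((p - 1) * q)
  have hyJ : y ^ q ∈ J := Ideal.subset_span (by simp)
  have hpJ : (p : R) ∈ J := Ideal.subset_span (by simp)
  have hE : y ^ q * a + p * b ∈ J := J.add_mem (J.mul_mem_right _ hyJ) (J.mul_mem_right _ hpJ)
  have hz : z * y ^ (q - 1) - (N - p * y ^ (q - 1)) ∈ Ideal.span {(p : R)} * J :=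
    Ideal.mem_span_singleton_mul.mpr ⟨-(y ^ q * a + p * b), J.neg_mem hE, by rw [hzy, h]; ring⟩
  have hzJ : ∀ j ∈ J, z * j ∈ Ideal.span {(p : R)} * J := by
    intro j hj
    obtain ⟨c, d, rfl⟩ := Ideal.mem_span_pair.mp hj
    refine Ideal.mem_span_singleton_mul.mpr
      ⟨-c * (y ^ q + y * (y ^ q * a + p * b)) + d * z, ?_, ?_⟩
    · exact J.add_mem (J.mul_mem_left _ (J.add_mem hyJ (J.mul_mem_left _ hE)))
        (J.mul_mem_left _ (hz_eq ▸ J.mul_mem_right _ hyJ))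
    · linear_combination -c * hzyq
  have hmain := Ideal.mul_le_left (pow_succ_mul_sub_mem_span_pow_mul hzN hz hzJ n)
  have hrest : (-(p : R)) ^ (n + 1) * y ^ (q - 1) ∈ Ideal.span {(p : R) ^ (n + 1)} :=
    Ideal.mem_span_singleton.mpr ((pow_dvd_pow_of_dvd (dvd_neg.mpr dvd_rfl) _).mul_right _)
  rw [hexp]
  convert Ideal.add_mem _ hmain hrest using 1
  ring

/-- Wilson's congruence: in `ℤ[t]`,
`(t-1)^{(β(p-1)+1)p^{α-1} - 1} ≡ (-p)^{β-1} ∑_{i=0}^{p^α - 1} t^i  (mod t^{p^α} - 1, p^β)`. -/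
theorem wilson_congruence (p : ℕ) (hp : p.Prime) (α β : ℕ) (hα : 1 ≤ α) (hβ : 1 ≤ β) :
    (X - 1) ^ ((β * (p - 1) + 1) * p ^ (α - 1) - 1)
        - C ((-(p : ℤ)) ^ (β - 1)) * ∑ i ∈ Finset.range (p ^ α), X ^ i
      ∈ Ideal.span {(X ^ (p ^ α) - 1 : Polynomial ℤ), (C ((p : ℤ) ^ β) : Polynomial ℤ)} := by
  obtain ⟨k, rfl⟩ : ∃ k, α = k + 1 := ⟨α - 1, by omega⟩
  obtain ⟨n, rfl⟩ : ∃ n, β = n + 1 := ⟨β - 1, by omega⟩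
  obtain ⟨a, b, hab⟩ := exists_X_sub_one_pow_prime_pow_sub_one_eq hp k
  set π := Ideal.Quotient.mk (Ideal.span {(X ^ p ^ (k + 1) - 1 : ℤ[X])})
  have hyN : π (X - 1) * π (∑ i ∈ Finset.range (p ^ (k + 1)), X ^ i) = 0 := by
    rw [← map_mul, mul_geom_sum, Ideal.Quotient.eq_zero_iff_mem]
    exact Ideal.mem_span_singleton_self _
  have h : π (X - 1) ^ (p * p ^ k - 1) = π (∑ i ∈ Finset.range (p ^ (k + 1)), X ^ i)
      - p * π (X - 1) ^ (p ^ k - 1) - p * (π (X - 1) ^ p ^ k * π a + p * π b) := by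
    rw [← pow_succ', ← map_pow, hab]
    simp only [map_sub, map_mul, map_pow, map_add, map_natCast]
  have hmem := pow_sub_neg_pow_mul_mem_span_pow hp.two_le (pow_pos hp.pos k) hyN h n
  rw [Nat.add_sub_cancel, Nat.add_sub_cancel, Ideal.span_insert, sup_comm,
    ← Ideal.mem_quotient_iff_mem_sup, Ideal.map_span, Set.image_singleton]
  simpa using hmem
end

section
/- Let A be an infinite commutative group and B a nontrivial commutative group. Then for every b ∈ B \ {0}, the delta function δ_{0,b}: A → B (sending 0 to b and every other element to 0) has infinite functional degree; in particular δ(A,B) = ∞. -/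
lemma foldr_fdiff_zero {A B : Type*} [AddCommGroup A] [AddCommGroup B]
    (f : A → B) : ∀ (l : List A) (x : A),
    (∀ s : List A, s.Sublist l → f (x + s.sum) = 0) → (l.foldr fdiff f) x = 0 := by
  intro l
  induction l with
  | nil =>
    intro x h
    have := h [] (List.Sublist.refl _)
    simpa using this
  | cons a t ih =>
    intro x h
    have heq : (a :: t).foldr fdiff f x = (t.foldr fdiff f) (x + a) - (t.foldr fdiff f) x := rfl
    rw [heq]
    have h1 : (t.foldr fdiff f) (x + a) = 0 := by
      apply ih
      intro s hs
      have := h (a :: s) (List.Sublist.cons₂ a hs)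
      simpa [add_assoc] using this
    have h2 : (t.foldr fdiff f) x = 0 := by
      apply ih
      intro s hs
      exact h s (hs.cons a)
    rw [h1, h2, sub_zero]

lemma foldr_fdiff_sign {A B : Type*} [AddCommGroup A] [AddCommGroup B]
    (f : A → B) : ∀ (l : List A) (x : A),
    (∀ s : List A, s.Sublist l → s ≠ [] → f (x + s.sum) = 0) →
    (l.foldr fdiff f) x = ((-1 : ℤ) ^ l.length) • f x := by
  intro l
  induction l with
  | nil => intro x _; simp
  | cons a t ih =>
    intro x h
    have heq : (a :: t).foldr fdiff f x = (t.foldr fdiff f) (x + a) - (t.foldr fdiff f) x := rfl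
    rw [heq]
    have h1 : (t.foldr fdiff f) (x + a) = 0 := by
      apply foldr_fdiff_zero
      intro s hs
      have := h (a :: s) (List.Sublist.cons₂ a hs) (by simp)
      simpa [add_assoc] using this
    have h2 : (t.foldr fdiff f) x = ((-1 : ℤ) ^ t.length) • f x := by
      apply ih
      intro s hs hne
      exact h s (hs.cons a) hne
    rw [h1, h2, zero_sub, List.length_cons, pow_succ, mul_comm, mul_smul, neg_one_zsmul]

lemma exists_good_list (A : Type*) [AddCommGroup A] [Infinite A] :
    ∀ n : ℕ, ∃ l : List A, l.length = n ∧
      ∀ s : List A, s.Sublist l → s ≠ [] → s.sum ≠ 0 := by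
  intro n
  classical
  induction n with
  | zero => exact ⟨[], rfl, by intro s hs hne; simp at hs; exact absurd hs hne⟩
  | succ n ih =>
    obtain ⟨l, hlen, hl⟩ := ih
    obtain ⟨a, ha⟩ := Infinite.exists_notMem_finset
      ((l.sublists.map (fun s => -s.sum)).toFinset : Finset A)
    refine ⟨a :: l, by simp [hlen], ?_⟩
    intro s hs hne
    rcases List.sublist_cons_iff.mp hs with h | ⟨r, rfl, hr⟩
    · exact hl s h hne
    · intro hsum
      apply ha
      simp only [List.mem_toFinset, List.mem_map]
      refine ⟨r, List.mem_sublists.mpr hr, ?_⟩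
      have h0 : a + r.sum = 0 := by simpa using hsum
      exact neg_eq_of_add_eq_zero_left h0

/-- If `A` is infinite and `b ≠ 0`, the delta function `δ_{0,b}` has infinite
functional degree; in particular `δ(A,B) = ∞`. -/
theorem fdeg_delta_eq_top {A B : Type*} [AddCommGroup A] [AddCommGroup B]
    [Infinite A] [DecidableEq A] (b : B) (hb : b ≠ 0) :
    fdeg (fun x : A => if x = 0 then b else 0) = ((⊤ : ℕ∞) : WithBot ℕ∞) ∧
      (⨆ f : A → B, fdeg f) = ((⊤ : ℕ∞) : WithBot ℕ∞) := by
  set f : A → B := fun x : A => if x = 0 then b else 0 with hf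
  have hf0 : f 0 = b := by simp [hf]
  have hfne : f ≠ 0 := by
    intro h
    apply hb
    rw [← hf0, h]; rfl
  have hnodeg : ¬ ∃ n : ℕ, DegLE f n := by
    rintro ⟨n, hn⟩
    obtain ⟨l, hlen, hl⟩ := exists_good_list A (n + 1)
    have hz := hn l hlen
    have hs := foldr_fdiff_sign f l 0 (by
      intro s hsub hne
      simp only [hf, zero_add]
      rw [if_neg (hl s hsub hne)])
    rw [hz] at hs
    have : ((-1 : ℤ) ^ l.length) • f 0 = 0 := hs.symm
    rw [hf0] at this
    rcases Nat.even_or_odd l.length with he | ho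
    · rw [he.neg_one_pow, one_zsmul] at this; exact hb this
    · rw [ho.neg_one_pow, neg_one_zsmul, neg_eq_zero] at this; exact hb this
  have hmain : fdeg f = ((⊤ : ℕ∞) : WithBot ℕ∞) := by
    rw [fdeg, if_neg hfne, if_neg hnodeg]
  refine ⟨hmain, ?_⟩
  rw [WithBot.coe_top]
  apply le_antisymm le_top
  rw [← WithBot.coe_top, ← hmain]
  exact le_iSup (fun g : A → B => fdeg g) f
end
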